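/- (Abstract form of Theorem 3.4.) Let X be a topological space, x₀ ∈ X, and for each pair of points a, b ∈ X let P a b be a set of paths from a to b. Assume: (comp) for all p ∈ P a b and q ∈ P b c there exists r ∈ P a c such that p · q is path-homotopic to r; (i) for every p ∈ P x₀ x₀ there exists p⁻ ∈ P x₀ x₀ such that the loop p · p⁻ is null-homotopic (path-homotopic to the constant loop at x₀); (ii) for every p ∈ P a b there exists some q ∈ P b a. Let S be the subgroupoid of the fundamental groupoid of X generated by the path-homotopy classes of all paths in P. Then every arrow of S from x₀ to x₀ is the path-homotopy class ⟦p⟧ of some p ∈ P x₀ x₀. (In the paper, X = BC_d^θ, P consists of the morphism paths γ_W, and the conclusion says every element of π₁(BC_d^θ) represented by a zigzag of morphism paths is represented by a single morphism path of a closed θ-manifold.) -/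

import Mathlib

/-! Write `Q a` for the classes of the paths of `P x₀ a`. The hypotheses make `Q x₀` a subgroup of
the loops at `x₀` and every nonempty `Q a` a right coset of it, so that precomposition with an arrow
of `P a b` carries `Q a` onto `Q b`. The arrows with this property form a subgroupoid, which hence
contains the generated one; a loop `f` in it sends `𝟙 ∈ Q x₀` to `f ∈ Q x₀`. -/

attribute [local instance] Path.Homotopic.setoid

open CategoryTheory

namespace CategoryTheory.Subgroupoid

variable {C : Type*} [Groupoid C]

theorem exists_nonempty_of_mem_objs_generated {X : ∀ c d : C, Set (c ⟶ d)} {c : C}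
    (hc : c ∈ (generated X).objs) :
    ∃ d, (X c d).Nonempty ∨ (X d c).Nonempty := by
  let D : Set C := {c | ∃ d, (X c d).Nonempty ∨ (X d c).Nonempty}
  have hle : generated X ≤ full D :=
    sInf_le fun a b f hf => (mem_full_iff D).2 ⟨⟨b, .inl ⟨f, hf⟩⟩, ⟨a, .inr ⟨f, hf⟩⟩⟩
  simpa [D] using le_objs hle hc

def transporter (x₀ : C) (Q : ∀ a : C, Set (x₀ ⟶ a)) : Subgroupoid C where
  arrows a b := {f | ∀ g, g ∈ Q a ↔ g ≫ f ∈ Q b}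
  inv {a b f} hf g := by
    simpa using (hf (g ≫ Groupoid.inv f)).symm
  mul {a b c f} hf {f'} hf' g := by
    simpa using (hf g).trans (hf' (g ≫ f))


section Transporter

variable {A : ∀ a b : C, Set (a ⟶ b)} {x₀ : C}

theorem inv_mem_of_exists_comp_eq_id (hinv : ∀ f ∈ A x₀ x₀, ∃ g ∈ A x₀ x₀, f ≫ g = 𝟙 x₀)
    {f : x₀ ⟶ x₀} (hf : f ∈ A x₀ x₀) : Groupoid.inv f ∈ A x₀ x₀ := by
  obtain ⟨g, hg, hfg⟩ := hinv f hf
  rwa [Groupoid.inv_eq_inv, IsIso.inv_eq_of_hom_inv_id hfg]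

theorem mem_iff_comp_inv_mem
    (hcomp : ∀ {a b c} {f : a ⟶ b} {g : b ⟶ c}, f ∈ A a b → g ∈ A b c → f ≫ g ∈ A a c)
    (hinv : ∀ f ∈ A x₀ x₀, ∃ g ∈ A x₀ x₀, f ≫ g = 𝟙 x₀)
    (hopp : ∀ {a b}, (A a b).Nonempty → (A b a).Nonempty)
    {a : C} {p : x₀ ⟶ a} (hp : p ∈ A x₀ a) (g : x₀ ⟶ a) :
    g ∈ A x₀ a ↔ g ≫ Groupoid.inv p ∈ A x₀ x₀ := by
  refine ⟨fun hg => ?_, fun h => by simpa using hcomp h hp⟩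
  obtain ⟨r, hr⟩ := hopp ⟨p, hp⟩
  have hgr : g ≫ Groupoid.inv p = (g ≫ r) ≫ Groupoid.inv (p ≫ r) := by simp
  exact hgr ▸ hcomp (hcomp hg hr) (inv_mem_of_exists_comp_eq_id hinv (hcomp hp hr))

theorem generated_le_transporter
    (hcomp : ∀ {a b c} {f : a ⟶ b} {g : b ⟶ c}, f ∈ A a b → g ∈ A b c → f ≫ g ∈ A a c)
    (hinv : ∀ f ∈ A x₀ x₀, ∃ g ∈ A x₀ x₀, f ≫ g = 𝟙 x₀)
    (hopp : ∀ {a b}, (A a b).Nonempty → (A b a).Nonempty) :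
    generated A ≤ transporter x₀ (A x₀) := by
  refine sInf_le fun a b f hf g => ?_
  by_cases ha : (A x₀ a).Nonempty
  · obtain ⟨p, hp⟩ := ha
    rw [mem_iff_comp_inv_mem hcomp hinv hopp hp,
      mem_iff_comp_inv_mem hcomp hinv hopp (hcomp hp hf)]
    simp
  · refine iff_of_false (fun hg => ha ⟨g, hg⟩) fun hgf => ha ?_
    obtain ⟨r, hr⟩ := hopp ⟨f, hf⟩
    exact ⟨_, hcomp hgf hr⟩

theorem generated_arrows_subset
    (hcomp : ∀ {a b c} {f : a ⟶ b} {g : b ⟶ c}, f ∈ A a b → g ∈ A b c → f ≫ g ∈ A a c)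
    (hinv : ∀ f ∈ A x₀ x₀, ∃ g ∈ A x₀ x₀, f ≫ g = 𝟙 x₀)
    (hopp : ∀ {a b}, (A a b).Nonempty → (A b a).Nonempty) :
    (generated A).arrows x₀ x₀ ⊆ A x₀ x₀ := by
  intro f hf
  have hloop : (A x₀ x₀).Nonempty := by
    obtain ⟨d, ⟨g, hg⟩ | ⟨g, hg⟩⟩ := exists_nonempty_of_mem_objs_generated (mem_objs_of_src _ hf)
    · obtain ⟨r, hr⟩ := hopp ⟨g, hg⟩
      exact ⟨_, hcomp hg hr⟩
    · obtain ⟨r, hr⟩ := hopp ⟨g, hg⟩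
      exact ⟨_, hcomp hr hg⟩
  have hid : 𝟙 x₀ ∈ A x₀ x₀ := by
    obtain ⟨p, hp⟩ := hloop
    obtain ⟨q, hq, hpq⟩ := hinv p hp
    exact hpq ▸ hcomp hp hq
  have hf' := (le_iff _ _).1 (generated_le_transporter hcomp hinv hopp) hf
  simpa using (hf' (𝟙 x₀)).1 hid

end Transporter

end CategoryTheory.Subgroupoid

theorem FundamentalGroupoid.mk_comp_mk {X : Type*} [TopologicalSpace X] {a b c : X}
    (p : Path a b) (q : Path b c) :
    (⟦p⟧ ≫ ⟦q⟧ : FundamentalGroupoid.mk a ⟶ FundamentalGroupoid.mk c) = ⟦p.trans q⟧ :=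
  (Path.Homotopic.Quotient.mk_trans p q).symm

/-- Abstract form of Theorem 3.4: let `P a b` be a family of paths closed under concatenation up
to path-homotopy (comp), such that every loop of `P` at `x₀` has an inverse in `P x₀ x₀` whose
concatenation with it is null-homotopic (i), and such that every path of `P` admits a path of `P`
in the opposite direction (ii).  Then every arrow from `x₀` to `x₀` in the subgroupoid of the
fundamental groupoid of `X` generated by the classes of paths of `P` is the path-homotopy class
of a single path of `P x₀ x₀`. -/
theorem arrows_of_generated_subgroupoid_are_single_paths
    {X : Type*} [TopologicalSpace X] (x₀ : X)
    (P : ∀ a b : X, Set (Path a b))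
    (hcomp : ∀ (a b c : X), ∀ p ∈ P a b, ∀ q ∈ P b c, ∃ r ∈ P a c, (p.trans q).Homotopic r)
    (hinv : ∀ p ∈ P x₀ x₀, ∃ pinv ∈ P x₀ x₀, (p.trans pinv).Homotopic (Path.refl x₀))
    (hopp : ∀ (a b : X), ∀ p, p ∈ P a b → ∃ q, q ∈ P b a) :
    ∀ f ∈ (Subgroupoid.generated
        (fun a b : FundamentalGroupoid X =>
          {f : a ⟶ b | ∃ p ∈ P a.as b.as, f = ⟦p⟧})).arrows
        (FundamentalGroupoid.mk x₀) (FundamentalGroupoid.mk x₀),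
      ∃ p ∈ P x₀ x₀, f = ⟦p⟧ := by
  refine Subgroupoid.generated_arrows_subset ?_ ?_ ?_
  · rintro _ _ _ _ _ ⟨p, hp, rfl⟩ ⟨q, hq, rfl⟩
    obtain ⟨r, hr, hpqr⟩ := hcomp _ _ _ p hp q hq
    exact ⟨r, hr, (FundamentalGroupoid.mk_comp_mk p q).trans (Quotient.sound hpqr)⟩
  · rintro _ ⟨p, hp, rfl⟩
    obtain ⟨pinv, hpinv, hnull⟩ := hinv p hp
    exact ⟨_, ⟨pinv, hpinv, rfl⟩,
      (FundamentalGroupoid.mk_comp_mk p pinv).trans (Quotient.sound hnull)⟩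
  · rintro _ _ ⟨_, p, hp, rfl⟩
    obtain ⟨q, hq⟩ := hopp _ _ p hp
    exact ⟨_, q, hq, rfl⟩
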